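/- Let f be a non-constant meromorphic function on ℂ and P[f] a differential polynomial generated by f, of lower degree d_(P), weight Γ and order k. If z₀ is a zero of f of order t with t ≥ k+1 and z₀ is neither a zero nor a pole of any coefficient b_j, then z₀ is a zero of P[f] of order at least (t+1)·d_(P) − Γ. -/

import Mathlib

open Filter MeasureTheory Classical

open scoped Classical

noncomputable section

namespace Nevanlinna

/-- The multiplicity of `z` as a zero of the meromorphic function `g`
(zero if `g` is not meromorphic at `z`, or has a pole or nonzero value there,
or vanishes identically near `z`). -/
def zeroMult (g : ℂ → ℂ) (z : ℂ) : ℕ :=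
  if h : MeromorphicAt g z then (WithTop.untopD 0 (meromorphicOrderAt g z)).toNat else 0

/-- The multiplicity of `z` as a pole of the meromorphic function `g`. -/
def poleMult (g : ℂ → ℂ) (z : ℂ) : ℕ :=
  if h : MeromorphicAt g z then (-(WithTop.untopD 0 (meromorphicOrderAt g z))).toNat else 0

/-- Unintegrated counting function: the number of points of the closed disc of
radius `r` about the origin, counted according to the multiplicity function `ν`. -/
def nCount (ν : ℂ → ℕ) (r : ℝ) : ℝ :=
  ∑ᶠ z ∈ Metric.closedBall (0 : ℂ) r, (ν z : ℝ)

/-- Integrated (Nevanlinna) counting function associated to a multiplicity function `ν`: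
`N(r) = ν(0)·log r + ∫₀ʳ (n(t) - ν(0))/t dt`. -/
def NCount (ν : ℂ → ℕ) (r : ℝ) : ℝ :=
  (ν 0 : ℝ) * Real.log r + ∫ t in (0 : ℝ)..r, (nCount ν t - (ν 0 : ℝ)) / t

/-- `N(r,0;g)` : integrated counting function of the zeros of `g`, with multiplicity. -/
def Nzero (g : ℂ → ℂ) : ℝ → ℝ := NCount (zeroMult g)

/-- `N̄(r,0;g)` : reduced integrated counting function of the zeros of `g`. -/
def NzeroRed (g : ℂ → ℂ) : ℝ → ℝ := NCount (fun z => min 1 (zeroMult g z))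

/-- `N̄(r,0;g|≥p)` : reduced counting function of the zeros of `g` of multiplicity `≥ p`. -/
def NzeroRedGe (g : ℂ → ℂ) (p : ℕ) : ℝ → ℝ :=
  NCount (fun z => if p ≤ zeroMult g z then 1 else 0)

/-- `N(r,0;g|≥p)` : counting function (with multiplicity) of the zeros of `g`
of multiplicity `≥ p`. -/
def NzeroGe (g : ℂ → ℂ) (p : ℕ) : ℝ → ℝ :=
  NCount (fun z => if p ≤ zeroMult g z then zeroMult g z else 0)

/-- `N(r,0;g|≤p)` : counting function (with multiplicity) of the zeros of `g`
of multiplicity `≤ p`. -/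
def NzeroLe (g : ℂ → ℂ) (p : ℕ) : ℝ → ℝ :=
  NCount (fun z => if zeroMult g z ≤ p then zeroMult g z else 0)

/-- `N_p(r,0;g) = N̄(r,0;g) + N̄(r,0;g|≥2) + ⋯ + N̄(r,0;g|≥p)`. -/
def NzeroTrunc (g : ℂ → ℂ) (p : ℕ) (r : ℝ) : ℝ :=
  ∑ q ∈ Finset.Icc 1 p, NzeroRedGe g q r

/-- `N(r,∞;g)` : integrated counting function of the poles of `g`, with multiplicity. -/
def Npole (g : ℂ → ℂ) : ℝ → ℝ := NCount (poleMult g)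

/-- `N̄(r,∞;g)` : reduced integrated counting function of the poles of `g`. -/
def NpoleRed (g : ℂ → ℂ) : ℝ → ℝ := NCount (fun z => min 1 (poleMult g z))

/-- The positive part of the logarithm, `log⁺ x = max (log x) 0`. -/
def plog (x : ℝ) : ℝ := max (Real.log x) 0

/-- The Nevanlinna proximity function `m(r,g)`. -/
def prox (g : ℂ → ℂ) (r : ℝ) : ℝ :=
  (2 * Real.pi)⁻¹ * ∫ θ in (0 : ℝ)..(2 * Real.pi), plog ‖g (r * Complex.exp (θ * Complex.I))‖

/-- The Nevanlinna characteristic function `T(r,g) = m(r,g) + N(r,∞;g)`. -/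
def charT (g : ℂ → ℂ) (r : ℝ) : ℝ := prox g r + Npole g r

/-- `s = S(r,f)` : `s(r)/T(r,f) → 0` as `r → ∞` outside a set `E` of finite
Lebesgue measure. -/
def IsSmall (s : ℝ → ℝ) (f : ℂ → ℂ) : Prop :=
  ∃ E : Set ℝ, volume E < ⊤ ∧
    Tendsto (fun r => s r / charT f r) (atTop ⊓ Filter.principal Eᶜ) (nhds 0)

/-- `a` is a small function of `f` : `T(r,a) = S(r,f)`. -/
def IsSmallFunction (a f : ℂ → ℂ) : Prop := IsSmall (charT a) f

/-- The deficiency `δ_p(0,g) = 1 - limsup_{r→∞} N_p(r,0;g)/T(r,g)`. -/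
def deltaP (p : ℕ) (g : ℂ → ℂ) : ℝ :=
  1 - Filter.limsup (fun r => NzeroTrunc g p r / charT g r) Filter.atTop

/-- The deficiency `δ(a,f) = 1 - limsup_{r→∞} N(r,a;f)/T(r,f)` of a (small) function `a`. -/
def deltaFn (a f : ℂ → ℂ) : ℝ :=
  1 - Filter.limsup (fun r => Nzero (fun z => f z - a z) r / charT f r) Filter.atTop

/-- `Θ(0,g) = 1 - limsup_{r→∞} N̄(r,0;g)/T(r,g)`. -/
def theta0 (g : ℂ → ℂ) : ℝ :=
  1 - Filter.limsup (fun r => NzeroRed g r / charT g r) Filter.atTop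

/-- `Θ(∞,g) = 1 - limsup_{r→∞} N̄(r,∞;g)/T(r,g)`. -/
def thetaInf (g : ℂ → ℂ) : ℝ :=
  1 - Filter.limsup (fun r => NpoleRed g r / charT g r) Filter.atTop

/-- The differential monomial `M[f] = f^{n₀}·(f')^{n₁}⋯(f^{(k)})^{n_k}`. -/
def diffMono {k : ℕ} (n : Fin (k + 1) → ℕ) (f : ℂ → ℂ) (z : ℂ) : ℂ :=
  ∏ i : Fin (k + 1), (iteratedDeriv i f z) ^ (n i)

/-- The degree `d(M) = Σ_{i=0}^k n_i` of a differential monomial. -/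
def monoDeg {k : ℕ} (n : Fin (k + 1) → ℕ) : ℕ := ∑ i : Fin (k + 1), n i

/-- The weight `Γ_M = Σ_{i=0}^k (i+1)·n_i` of a differential monomial. -/
def monoWt {k : ℕ} (n : Fin (k + 1) → ℕ) : ℕ := ∑ i : Fin (k + 1), (i.1 + 1) * n i

/-- The differential polynomial `P[f] = Σ_{j=1}^t b_j·M_j[f]`. -/
def diffPoly {t k : ℕ} (b : Fin t → ℂ → ℂ) (M : Fin t → Fin (k + 1) → ℕ)
    (f : ℂ → ℂ) (z : ℂ) : ℂ :=
  ∑ j : Fin t, b j z * diffMono (M j) f z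

/-- The functions `g` and `h` share the value `0` with weight `l`, i.e.
`E_l(0;g) = E_l(0;h)` : at every point the multiplicities as zeros of `g` and of `h`,
both truncated at level `l+1`, coincide. -/
def ShareZero (l : ℕ) (g h : ℂ → ℂ) : Prop :=
  ∀ z : ℂ, min (l + 1) (zeroMult g z) = min (l + 1) (zeroMult h z)

/-- `f` is a non-constant meromorphic function on the complex plane. -/
def NonconstMero (f : ℂ → ℂ) : Prop :=
  MeromorphicOn f Set.univ ∧ ¬ ∃ c : ℂ, ∀ z, f z = c

end Nevanlinna

open Nevanlinna

/-!
Differentiation lowers the order of a zero by exactly one, so at a zero of `f` of order `t ≥ k`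
the factor `(f^{(i)})^{n_i}` of a monomial vanishes to order `n_i (t - i)`, and the monomial to
order `Σ n_i (t - i) = (t + 1) d(M) - Γ_M ≥ (t + 1) d_(P) - Γ`, which is nonnegative since
`Γ_M ≤ (k + 1) d(M)`. The coefficients are analytic at the zero, and the order of a sum is at
least the least order of its summands.
-/

section MeromorphicOrder

variable {𝕜 : Type*} [NontriviallyNormedField 𝕜] {E : Type*} [NormedAddCommGroup E]
  [NormedSpace 𝕜 E] {x : 𝕜}

theorem le_meromorphicOrderAt_sum {ι : Type*} {s : Finset ι} {F : ι → 𝕜 → E} {m : WithTop ℤ}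
    (hF : ∀ i ∈ s, MeromorphicAt (F i) x) (hm : ∀ i ∈ s, m ≤ meromorphicOrderAt (F i) x) :
    m ≤ meromorphicOrderAt (fun z => ∑ i ∈ s, F i z) x := by
  classical
  induction s using Finset.induction with
  | empty =>
    simp only [Finset.sum_empty, le_top,
      meromorphicOrderAt_eq_top_iff.mpr (Eventually.of_forall fun _ => rfl)]
  | insert a s ha ih =>
    simp only [Finset.mem_insert, forall_eq_or_imp] at hF hm
    simp only [Finset.sum_insert ha]
    exact (le_min hm.1 (ih hF.2 hm.2)).trans
      (meromorphicOrderAt_add hF.1 (MeromorphicAt.fun_sum hF.2))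

variable [CompleteSpace E] {f : 𝕜 → E}

theorem MeromorphicAt.iteratedDeriv (hf : MeromorphicAt f x) (i : ℕ) :
    MeromorphicAt (iteratedDeriv i f) x := by
  induction i with
  | zero => simpa using hf
  | succ i ih => simpa [iteratedDeriv_succ] using ih.deriv

theorem meromorphicOrderAt_iteratedDeriv {n : ℤ} (hf : meromorphicOrderAt f x = n) (i : ℕ)
    (hn : ∀ j < i, ((n - j : ℤ) : 𝕜) ≠ 0) :
    meromorphicOrderAt (iteratedDeriv i f) x = ↑(n - i) := by
  induction i with
  | zero => simpa using hf
  | succ i ih =>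
    rw [iteratedDeriv_succ, meromorphicOrderAt_deriv_eq_sub_one (hn i i.lt_succ_self)
      (ih fun j hj => hn j (Nat.lt_succ_of_lt hj))]
    congr 1
    push_cast
    ring

end MeromorphicOrder

namespace Nevanlinna

variable {k : ℕ}

theorem monoWt_le_mul_monoDeg (n : Fin (k + 1) → ℕ) : monoWt n ≤ (k + 1) * monoDeg n := by
  rw [monoWt, monoDeg, Finset.mul_sum]
  exact Finset.sum_le_sum fun i _ => Nat.mul_le_mul_right _ (by omega)

theorem sum_mul_sub_eq_monoDeg_monoWt (n : Fin (k + 1) → ℕ) (t : ℤ) :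
    ∑ i : Fin (k + 1), (n i : ℤ) * (t - i) = (t + 1) * monoDeg n - monoWt n := by
  simp only [monoDeg, monoWt, Nat.cast_sum, Nat.cast_mul, Finset.mul_sum,
    ← Finset.sum_sub_distrib]
  refine Finset.sum_congr rfl fun i _ => ?_
  push_cast
  ring

variable {f : ℂ → ℂ} {x : ℂ}

theorem _root_.MeromorphicAt.diffMono (hf : MeromorphicAt f x) (n : Fin (k + 1) → ℕ) :
    MeromorphicAt (diffMono n f) x :=
  MeromorphicAt.fun_prod fun i _ => (hf.iteratedDeriv i).pow _

theorem meromorphicOrderAt_diffMono (hf : MeromorphicAt f x) (n : Fin (k + 1) → ℕ) :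
    meromorphicOrderAt (diffMono n f) x =
      ∑ i : Fin (k + 1), n i * meromorphicOrderAt (iteratedDeriv i f) x := by
  refine (meromorphicOrderAt_fun_prod (f := fun i : Fin (k + 1) => iteratedDeriv i f ^ n i)
    fun i _ => (hf.iteratedDeriv i).pow _).trans ?_
  exact Finset.sum_congr rfl fun i _ => meromorphicOrderAt_pow (hf.iteratedDeriv i)

theorem meromorphicOrderAt_diffMono_of_order_eq {t : ℕ} (hf : MeromorphicAt f x)
    (hft : meromorphicOrderAt f x = t) (hk : k ≤ t) (n : Fin (k + 1) → ℕ) :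
    meromorphicOrderAt (diffMono n f) x = ↑((t + 1) * monoDeg n - monoWt n : ℤ) := by
  have hderiv (i : Fin (k + 1)) : meromorphicOrderAt (iteratedDeriv i f) x = ↑(t - i : ℤ) :=
    meromorphicOrderAt_iteratedDeriv hft i fun j hj => by
      exact_mod_cast (show (t - j : ℤ) ≠ 0 by omega)
  rw [meromorphicOrderAt_diffMono hf, ← sum_mul_sub_eq_monoDeg_monoWt]
  simp only [hderiv]
  push_cast
  rfl

theorem le_meromorphicOrderAt_diffPoly {t : ℕ} {b : Fin t → ℂ → ℂ} {M : Fin t → Fin (k + 1) → ℕ}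
    {m : WithTop ℤ} (hb : ∀ j, AnalyticAt ℂ (b j) x) (hf : MeromorphicAt f x)
    (hm : ∀ j, m ≤ meromorphicOrderAt (diffMono (M j) f) x) :
    m ≤ meromorphicOrderAt (diffPoly b M f) x := by
  refine le_meromorphicOrderAt_sum (fun j _ => (hb j).meromorphicAt.mul (hf.diffMono _))
    fun j _ => ?_
  rw [show (fun z => b j z * diffMono (M j) f z) = b j * diffMono (M j) f from rfl,
    meromorphicOrderAt_mul (hb j).meromorphicAt (hf.diffMono _)]
  simpa using add_le_add (hb j).meromorphicOrderAt_nonneg (hm j)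

end Nevanlinna

theorem zero_order_diffPoly_at_deep_zero_general
    (f : ℂ → ℂ)
    {t k : ℕ} (b : Fin t → ℂ → ℂ) (M : Fin t → Fin (k + 1) → ℕ)
    (dlow : ℕ)
    (hdlow : (∀ j, dlow ≤ monoDeg (M j)) ∧ ∃ j, monoDeg (M j) = dlow)
    (Γ : ℕ)
    (hΓ : (∀ j, monoWt (M j) ≤ Γ) ∧ ∃ j, monoWt (M j) = Γ)
    (z₀ : ℂ) (tord : ℕ) (ht : k + 1 ≤ tord)
    (hzero : meromorphicOrderAt f z₀ = ((tord : ℤ) : WithTop ℤ))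
    (hbz : ∀ j, AnalyticAt ℂ (b j) z₀ ∧ b j z₀ ≠ 0) :
    ∀ hP : MeromorphicAt (diffPoly b M f) z₀,
      (0 : WithTop ℤ) ≤ meromorphicOrderAt (diffPoly b M f) z₀ ∧
      ((((tord : ℤ) + 1) * dlow - Γ : ℤ) : WithTop ℤ) ≤ meromorphicOrderAt (diffPoly b M f) z₀ := by
  intro _
  have hf : MeromorphicAt f z₀ := meromorphicAt_of_meromorphicOrderAt_ne_zero <| by
    rw [hzero]; exact_mod_cast (show (tord : ℤ) ≠ 0 by omega)
  have hmono (j : Fin t) : meromorphicOrderAt (diffMono (M j) f) z₀ =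
      ↑((tord + 1) * monoDeg (M j) - monoWt (M j) : ℤ) :=
    meromorphicOrderAt_diffMono_of_order_eq hf hzero (by omega) (M j)
  have hb (j : Fin t) : AnalyticAt ℂ (b j) z₀ := (hbz j).1
  constructor
  · refine le_meromorphicOrderAt_diffPoly hb hf fun j => ?_
    have hwt : monoWt (M j) ≤ (tord + 1) * monoDeg (M j) :=
      (monoWt_le_mul_monoDeg (M j)).trans (Nat.mul_le_mul_right _ (by omega))
    rw [hmono]
    exact_mod_cast (sub_nonneg.2 (by exact_mod_cast hwt) :
      (0 : ℤ) ≤ (tord + 1) * monoDeg (M j) - monoWt (M j))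
  · refine le_meromorphicOrderAt_diffPoly hb hf fun j => ?_
    rw [hmono]
    exact_mod_cast (show ((tord : ℤ) + 1) * dlow - Γ ≤ (tord + 1) * monoDeg (M j) - monoWt (M j) by
      have := hdlow.1 j; have := hΓ.1 j; nlinarith)

/-- a zero of `f` of order `t ≥ k+1`, at which no coefficient has a zero
or a pole, is a zero of `P[f]` of order at least `(t+1)·d_(P) − Γ`. -/
theorem zero_order_diffPoly_at_deep_zero
    (f : ℂ → ℂ) (hf : NonconstMero f)
    {t k : ℕ} (b : Fin t → ℂ → ℂ) (M : Fin t → Fin (k + 1) → ℕ)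
    (hbmero : ∀ j, MeromorphicOn (b j) Set.univ)
    (hbsmall : ∀ j, IsSmallFunction (b j) f)
    (dlow : ℕ)
    (hdlow : (∀ j, dlow ≤ monoDeg (M j)) ∧ ∃ j, monoDeg (M j) = dlow)
    (Γ : ℕ)
    (hΓ : (∀ j, monoWt (M j) ≤ Γ) ∧ ∃ j, monoWt (M j) = Γ)
    (hord : ∃ j, M j (Fin.last k) ≠ 0)
    (z₀ : ℂ) (tord : ℕ) (ht : k + 1 ≤ tord)
    (hzero : meromorphicOrderAt f z₀ = ((tord : ℤ) : WithTop ℤ))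
    (hbz : ∀ j, AnalyticAt ℂ (b j) z₀ ∧ b j z₀ ≠ 0) :
    ∀ hP : MeromorphicAt (diffPoly b M f) z₀,
      (0 : WithTop ℤ) ≤ meromorphicOrderAt (diffPoly b M f) z₀ ∧
      ((((tord : ℤ) + 1) * dlow - Γ : ℤ) : WithTop ℤ) ≤ meromorphicOrderAt (diffPoly b M f) z₀ :=
  zero_order_diffPoly_at_deep_zero_general f b M dlow hdlow Γ hΓ z₀ tord ht hzero hbz
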